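/- arXiv:1709.00544 — 2 statements merged into one kernel-verified Lean document; each statement's English description precedes it below -/
import Mathlib

section
/- Let (u(x))_{x≥1} be i.i.d. ℕ-valued random variables with P(u(1) = 0) < 1, and let v(x) be the dual offspring numbers. Suppose v(1), v(2), v(3), … are mutually independent and v(2), v(3), … all have the same distribution. Then there exist p, q ∈ (0,1] such that P(u(1) = 0) = 1 − q and P(u(1) = k) = q (1 − p)^{k−1} p for all k ≥ 1; that is, the primary reproduction law is linear-fractional. -/
/-!
Outside the null event that `u` is eventually `0`, the dual offspring numbers `v(2), …, v(k+1)`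
all vanish iff levels `1` and `k + 1` are first passed by `U` at the same time, i.e. iff the
first nonzero `u(n)` is at least `k + 1`. For i.i.d. `u` this first nonzero value has the law of
`u(1)` conditioned on `u(1) ≥ 1`, while independence of the `v`s gives probability `b ^ k` with
`b = P(v(2) = 0)`. Hence `P(u(1) ≥ k + 1) = q b ^ k` with `q = P(u(1) ≥ 1)`: a geometric tail,
which is exactly a linear-fractional law with `p = 1 - b`.
-/

open MeasureTheory ProbabilityTheory Filter Finset Function
open scoped ENNReal Topology

def cumSum (u : ℕ → ℕ) (x : ℕ) : ℕ := ∑ i ∈ Icc 1 x, u i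

/-- Since `sInf ∅ = 0`, this is a passage time only for levels that `U` reaches. -/
noncomputable def firstPassage (U : ℕ → ℕ) (x : ℕ) : ℕ := sInf {y | x ≤ U y}

lemma Monotone.forall_Icc_succ_le_iff {α : Type*} [Preorder α] {f : ℕ → α} (hf : Monotone f)
    (a b : ℕ) : (∀ j ∈ Icc a b, f (j + 1) ≤ f j) ↔ f (b + 1) ≤ f a := by
  constructor
  · intro h
    induction b with
    | zero =>
      rcases Nat.eq_zero_or_pos a with rfl | ha
      · exact h 0 (by simp)
      · exact hf ha
    | succ b ih =>
      by_cases hab : a ≤ b + 1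
      · exact (h (b + 1) (mem_Icc.mpr ⟨hab, le_rfl⟩)).trans
          (ih fun j hj => h j (Icc_subset_Icc_right (by omega) hj))
      · exact hf (by omega)
  · intro h j hj
    have := mem_Icc.mp hj
    exact (hf (by omega : j + 1 ≤ b + 1)).trans (h.trans (hf this.1))

section Deterministic

variable (u : ℕ → ℕ)

@[simp] lemma cumSum_zero : cumSum u 0 = 0 := by simp [cumSum]

lemma cumSum_succ (n : ℕ) : cumSum u (n + 1) = cumSum u n + u (n + 1) :=
  sum_Icc_succ_top (by omega) u

lemma monotone_cumSum : Monotone (cumSum u) :=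
  monotone_nat_of_le_succ fun n => by rw [cumSum_succ]; omega

lemma cumSum_eq_zero_iff (n : ℕ) : cumSum u n = 0 ↔ ∀ i < n, u (i + 1) = 0 := by
  induction n with
  | zero => simp
  | succ n ih => rw [cumSum_succ, Nat.add_eq_zero_iff, ih, Nat.forall_lt_succ_right]

lemma exists_le_cumSum (h : ∃ᶠ i in atTop, u (i + 1) ≠ 0) (x : ℕ) : ∃ y, x ≤ cumSum u y := by
  induction x with
  | zero => exact ⟨0, Nat.zero_le _⟩
  | succ x ih =>
    obtain ⟨z, hz⟩ := ih
    obtain ⟨i, hzi, hi⟩ := h.forall_exists_of_atTop z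
    refine ⟨i + 1, ?_⟩
    have := monotone_cumSum u hzi
    rw [cumSum_succ]
    omega

lemma gc_firstPassage {U : ℕ → ℕ} (hU : Monotone U) (h : ∀ x, ∃ y, x ≤ U y) :
    GaloisConnection (firstPassage U) U := fun x _ =>
  ⟨fun hxy => le_trans (Nat.sInf_mem (s := {y | x ≤ U y}) (h x)) (hU hxy),
    fun hxy => Nat.sInf_le hxy⟩

lemma firstPassage_succ_le_firstPassage_one_iff (h : ∀ x, ∃ y, x ≤ cumSum u y) (m : ℕ) :
    firstPassage (cumSum u) (m + 1) ≤ firstPassage (cumSum u) 1 ↔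
      ∃ n, (∀ i < n, u (i + 1) = 0) ∧ m + 1 ≤ u (n + 1) := by
  have gc := gc_firstPassage (monotone_cumSum u) h
  have not_le_of_zero : ∀ n, cumSum u n = 0 → ¬ firstPassage (cumSum u) 1 ≤ n := fun n hn hle =>
    by simpa [hn] using (gc 1 n).mp hle
  rw [gc]
  constructor
  · intro hm
    obtain ⟨n, hn⟩ : ∃ n, firstPassage (cumSum u) 1 = n + 1 := Nat.exists_eq_add_one.mpr
      (Nat.pos_of_ne_zero fun h0 => not_le_of_zero 0 (cumSum_zero u) h0.le)
    have hzero : cumSum u n = 0 := by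
      by_contra hne
      have := (gc 1 n).mpr (Nat.one_le_iff_ne_zero.mpr hne)
      omega
    refine ⟨n, (cumSum_eq_zero_iff u n).mp hzero, ?_⟩
    rwa [hn, cumSum_succ, hzero, zero_add] at hm
  · rintro ⟨n, hzero, hn⟩
    have h0 := (cumSum_eq_zero_iff u n).mpr hzero
    calc m + 1 ≤ cumSum u (n + 1) := by rw [cumSum_succ, h0]; omega
      _ ≤ _ := monotone_cumSum u (by have := not_le_of_zero n h0; omega)

lemma forall_firstPassage_sub_eq_zero_iff (h : ∀ x, ∃ y, x ≤ cumSum u y) (k : ℕ) :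
    (∀ j ∈ Icc 1 k, firstPassage (cumSum u) (j + 1) - firstPassage (cumSum u) j = 0) ↔
      ∃ n, (∀ i < n, u (i + 1) = 0) ∧ k + 1 ≤ u (n + 1) := by
  simp only [Nat.sub_eq_zero_iff_le]
  rw [(gc_firstPassage (monotone_cumSum u) h).monotone_l.forall_Icc_succ_le_iff,
    firstPassage_succ_le_firstPassage_one_iff u h]

end Deterministic

lemma identDistrib_of_measure_preimage_singleton {Ω α : Type*} [MeasurableSpace Ω]
    [MeasurableSpace α] [MeasurableSingletonClass α] [Countable α] {μ : Measure Ω}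
    {f g : Ω → α} (hf : Measurable f) (hg : Measurable g)
    (h : ∀ a, μ {ω | f ω = a} = μ {ω | g ω = a}) : IdentDistrib f g μ μ where
  aemeasurable_fst := hf.aemeasurable
  aemeasurable_snd := hg.aemeasurable
  map_eq := Measure.ext_of_singleton fun a => by
    rw [Measure.map_apply hf (measurableSet_singleton a),
      Measure.map_apply hg (measurableSet_singleton a)]
    exact h a

section FirstNonzero

variable {Ω : Type*} [MeasurableSpace Ω] {μ : Measure Ω} {X : ℕ → Ω → ℕ}

lemma measure_zeros_then_mem (hindep : iIndepFun X μ)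
    (hident : ∀ n, IdentDistrib (X n) (X 0) μ μ) (n : ℕ) (S : Set ℕ) :
    μ {ω | (∀ i < n, X i ω = 0) ∧ X n ω ∈ S} = μ (X 0 ⁻¹' {0}) ^ n * μ (X 0 ⁻¹' S) := by
  classical
  let A : ℕ → Set ℕ := fun i => if i = n then S else {0}
  have hset : {ω | (∀ i < n, X i ω = 0) ∧ X n ω ∈ S} = ⋂ i ∈ range (n + 1), X i ⁻¹' A i := by
    ext ω
    simp only [Set.mem_ofPred_eq, Set.mem_iInter, mem_range, Nat.forall_lt_succ_right,
      Set.mem_preimage]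
    refine and_congr (forall₂_congr fun i hi => ?_) ?_
    · simp [A, hi.ne]
    · simp [A]
  have hA : ∀ i ∈ range n, μ (X i ⁻¹' A i) = μ (X 0 ⁻¹' {0}) := fun i hi => by
    simp only [A, if_neg (mem_range.mp hi).ne]
    exact (hident i).measure_mem_eq .of_discrete
  rw [hset, hindep.measure_inter_preimage_eq_mul _ fun _ _ => .of_discrete, prod_range_succ,
    prod_congr rfl hA, prod_const, card_range]
  simp only [A, if_pos rfl]
  rw [(hident n).measure_mem_eq .of_discrete]

lemma measure_exists_zeros_then_mem (hX : ∀ n, Measurable (X n)) (hindep : iIndepFun X μ)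
    (hident : ∀ n, IdentDistrib (X n) (X 0) μ μ) {S : Set ℕ} (hS : 0 ∉ S) :
    μ {ω | ∃ n, (∀ i < n, X i ω = 0) ∧ X n ω ∈ S} =
      μ (X 0 ⁻¹' S) * (1 - μ (X 0 ⁻¹' {0}))⁻¹ := by
  have hdisj : Pairwise (Disjoint on fun n => {ω | (∀ i < n, X i ω = 0) ∧ X n ω ∈ S}) := by
    refine (pairwise_disjoint_on _).mpr fun m n hmn => Set.disjoint_left.mpr ?_
    rintro ω ⟨-, hm⟩ ⟨hn, -⟩
    exact hS (hn m hmn ▸ hm)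
  have hmeas : ∀ n, MeasurableSet {ω | (∀ i < n, X i ω = 0) ∧ X n ω ∈ S} := fun n => by
    measurability
  rw [Set.ofPred_exists, measure_iUnion hdisj hmeas]
  simp_rw [measure_zeros_then_mem hindep hident]
  rw [ENNReal.tsum_mul_right, ENNReal.tsum_geometric, mul_comm]

lemma ae_frequently_ne_zero [IsProbabilityMeasure μ] (hX : ∀ n, Measurable (X n))
    (hindep : iIndepFun X μ) (hident : ∀ n, IdentDistrib (X n) (X 0) μ μ)
    (h0 : μ (X 0 ⁻¹' {0}) < 1) : ∀ᵐ ω ∂μ, ∃ᶠ n in atTop, X n ω ≠ 0 := by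
  let s : ℕ → Set Ω := fun n => X n ⁻¹' {0}ᶜ
  have hs : ∀ n, MeasurableSet (s n) := fun n => hX n .of_discrete
  have hs_indep : iIndepSet s μ := (iIndepSet_iff_meas_biInter hs).mpr fun t =>
    hindep.measure_inter_preimage_eq_mul t fun _ _ => .of_discrete
  have hs_meas : ∀ n, μ (s n) = 1 - μ (X 0 ⁻¹' {0}) := fun n => by
    rw [(hident n).measure_mem_eq .of_discrete, Set.preimage_compl,
      prob_compl_eq_one_sub (hX 0 .of_discrete)]
  have hsum : ∑' n, μ (s n) = ∞ := by
    simp_rw [hs_meas]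
    exact ENNReal.tsum_const_eq_top_of_ne_zero (tsub_pos_of_lt h0).ne'
  have hlimsup := measure_limsup_eq_one hs hs_indep hsum
  rw [← measure_univ (μ := μ),
    ← ae_mem_iff_measure_eq (MeasurableSet.measurableSet_limsup hs).nullMeasurableSet] at hlimsup
  filter_upwards [hlimsup] with ω hω
  exact mem_limsup_iff_frequently_mem.mp hω

end FirstNonzero

section GeometricTail

variable {Ω : Type*} [MeasurableSpace Ω] {μ : Measure Ω} [IsFiniteMeasure μ] {Y : Ω → ℕ}
  {q b : ℝ≥0∞}

lemma lt_one_of_measure_le_eq_mul_pow (hY : Measurable Y)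
    (htail : ∀ k, μ {ω | k + 1 ≤ Y ω} = q * b ^ k) (hq : q ≠ 0) : b < 1 := by
  by_contra! hb
  have hlim : Tendsto (fun k => μ {ω | k + 1 ≤ Y ω}) atTop (𝓝 0) := by
    have hempty : ⋂ k : ℕ, {ω | k + 1 ≤ Y ω} = ∅ :=
      Set.eq_empty_of_forall_notMem fun ω hω => by simpa using Set.mem_iInter.mp hω (Y ω)
    have h := tendsto_measure_iInter_atTop (μ := μ) (s := fun k : ℕ => {ω | k + 1 ≤ Y ω})
      (fun k => (hY measurableSet_Ici).nullMeasurableSet)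
      (fun k l hkl ω (hω : l + 1 ≤ Y ω) => show k + 1 ≤ Y ω by omega) ⟨0, measure_ne_top μ _⟩
    rwa [hempty, measure_empty] at h
  refine hq (le_antisymm (ge_of_tendsto' hlim fun k => ?_) zero_le)
  rw [htail]
  exact le_mul_of_one_le_right' (one_le_pow₀ hb)

lemma measure_eq_of_measure_le_eq_mul_pow (hY : Measurable Y)
    (htail : ∀ k, μ {ω | k + 1 ≤ Y ω} = q * b ^ k) (k : ℕ) :
    μ {ω | Y ω = k + 1} = q * b ^ k * (1 - b) := by
  have hsplit : μ {ω | Y ω = k + 1} + μ {ω | k + 1 + 1 ≤ Y ω} = μ {ω | k + 1 ≤ Y ω} := by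
    have hmeas : MeasurableSet {ω | k + 1 + 1 ≤ Y ω} := hY measurableSet_Ici
    rw [← measure_union _ hmeas]
    · congr 1; ext ω; simp only [Set.mem_union, Set.mem_ofPred_eq]; omega
    · exact Set.disjoint_left.mpr fun ω h1 h2 => by simp_all
  rw [htail, htail] at hsplit
  rw [ENNReal.eq_sub_of_add_eq (htail (k + 1) ▸ measure_ne_top μ _) hsplit, pow_succ, ← mul_assoc,
    ENNReal.mul_sub fun _ hb => ?_, mul_one]
  have hq : q ≠ ∞ := by
    have h := htail 0
    rw [pow_zero, mul_one] at h
    exact h ▸ measure_ne_top μ _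
  exact ENNReal.mul_ne_top hq (ENNReal.pow_ne_top hb.ne_top)

end GeometricTail

lemma measure_biInter_dual_eq_zero {Ω : Type*} [MeasurableSpace Ω] {μ : Measure Ω}
    [IsProbabilityMeasure μ] {u : ℕ → Ω → ℕ} (hmeas : ∀ x, Measurable (u x))
    (hindep : iIndepFun (fun n => u (n + 1)) μ) (hident : ∀ n, IdentDistrib (u (n + 1)) (u 1) μ μ)
    (hP0lt : μ {ω | u 1 ω = 0} < 1) {V : Ω → ℕ → ℕ}
    (hV : ∀ ω, V ω = firstPassage (cumSum (u · ω))) {v : ℕ → Ω → ℕ}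
    (hv : ∀ x, 1 ≤ x → ∀ ω, v x ω = V ω x - V ω (x - 1)) (k : ℕ) :
    μ (⋂ j ∈ Icc 1 k, v (j + 1) ⁻¹' {0}) =
      μ {ω | k + 1 ≤ u 1 ω} * (1 - μ {ω | u 1 ω = 0})⁻¹ := by
  have hX : ∀ n, Measurable (u (n + 1)) := fun n => hmeas (n + 1)
  have hfirst := measure_exists_zeros_then_mem hX hindep hident (S := Set.Ici (k + 1)) (by simp)
  change _ = μ {ω | k + 1 ≤ u 1 ω} * (1 - μ {ω | u 1 ω = 0})⁻¹ at hfirst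
  rw [← hfirst]
  refine measure_congr (eventuallyEq_set.mpr ?_)
  filter_upwards [ae_frequently_ne_zero hX hindep hident hP0lt] with ω hω
  simp only [Set.mem_iInter, Set.mem_preimage, Set.mem_singleton_iff, Set.mem_Ici]
  rw [← forall_firstPassage_sub_eq_zero_iff _ (exists_le_cumSum (u · ω) hω) k]
  refine forall₂_congr fun j _ => ?_
  rw [hv (j + 1) (by omega), hV, Nat.add_sub_cancel]

/-- If the dual offspring numbers `v(1), v(2), …` of an i.i.d. reproduction law
(with `P(u(1)=0) < 1`) are mutually independent and `v(2), v(3), …` are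
identically distributed, then the primary reproduction law is linear-fractional:
there are `p, q ∈ (0,1]` with `P(u(1)=0) = 1 - q` and
`P(u(1)=k) = q(1-p)^{k-1}p` for `k ≥ 1`. -/
theorem stmt_15 {Ω : Type*} [MeasurableSpace Ω] (μ : Measure Ω) [IsProbabilityMeasure μ]
    (u : ℕ → Ω → ℕ) (hmeas : ∀ x : ℕ, Measurable (u x))
    (hindep : iIndepFun (fun n : ℕ => u (n + 1)) μ)
    (hident : ∀ x : ℕ, 1 ≤ x → ∀ k : ℕ, μ {ω | u x ω = k} = μ {ω | u 1 ω = k})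
    (hP0lt : μ {ω | u 1 ω = 0} < 1)
    (U : Ω → ℕ → ℕ) (hU : ∀ ω : Ω, ∀ x : ℕ, U ω x = ∑ i ∈ Finset.Icc 1 x, u i ω)
    (V : Ω → ℕ → ℕ) (hV : ∀ ω : Ω, ∀ x : ℕ, V ω x = sInf {y : ℕ | x ≤ U ω y})
    (v : ℕ → Ω → ℕ) (hv : ∀ x : ℕ, 1 ≤ x → ∀ ω : Ω, v x ω = V ω x - V ω (x - 1))
    (hvindep : iIndepFun (fun n : ℕ => v (n + 1)) μ)
    (hvident : ∀ x : ℕ, 2 ≤ x → ∀ k : ℕ, μ {ω | v x ω = k} = μ {ω | v 2 ω = k}) :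
    ∃ p q : ℝ≥0∞, 0 < p ∧ p ≤ 1 ∧ 0 < q ∧ q ≤ 1 ∧
      μ {ω | u 1 ω = 0} = 1 - q ∧
      ∀ k : ℕ, 1 ≤ k → μ {ω | u 1 ω = k} = q * (1 - p) ^ (k - 1) * p := by
  have hident' : ∀ n, IdentDistrib (u (n + 1)) (u 1) μ μ := fun n =>
    identDistrib_of_measure_preimage_singleton (hmeas _) (hmeas _) (hident (n + 1) (by omega))
  have hV' : ∀ ω, V ω = firstPassage (cumSum (u · ω)) := fun ω => by
    ext x; rw [hV, show U ω = cumSum (u · ω) from funext (hU ω)]; rfl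
  set q := μ {ω | 1 ≤ u 1 ω}
  set b := μ {ω | v 2 ω = 0}
  have hq : 1 - μ {ω | u 1 ω = 0} = q := by
    have h0 : MeasurableSet {ω | u 1 ω = 0} := hmeas 1 (measurableSet_singleton 0)
    rw [← prob_compl_eq_one_sub h0]
    exact congrArg μ (by ext ω; simp [Nat.one_le_iff_ne_zero])
  have hq0 : q ≠ 0 := hq ▸ (tsub_pos_of_lt hP0lt).ne'
  have htail : ∀ k, μ {ω | k + 1 ≤ u 1 ω} = q * b ^ k := fun k => by
    have hB : μ (⋂ j ∈ Icc 1 k, v (j + 1) ⁻¹' {0}) = b ^ k := by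
      rw [hvindep.meas_biInter fun _ _ => ⟨{0}, .of_discrete, rfl⟩,
        prod_eq_pow_card fun j hj => ?_, Nat.card_Icc, Nat.add_sub_cancel]
      exact hvident (j + 1) (by simp at hj; omega) 0
    rw [← hB, measure_biInter_dual_eq_zero hmeas hindep hident' hP0lt hV' hv, hq, ← div_eq_mul_inv,
      ENNReal.mul_div_cancel hq0 (measure_ne_top μ _)]
  refine ⟨1 - b, q, tsub_pos_of_lt ?_, tsub_le_self, pos_iff_ne_zero.mpr hq0, prob_le_one, ?_,
    fun k hk => ?_⟩
  · exact lt_one_of_measure_le_eq_mul_pow (hmeas 1) htail hq0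
  · rw [← hq, ENNReal.sub_sub_cancel ENNReal.one_ne_top prob_le_one]
  · obtain ⟨j, rfl⟩ := Nat.exists_eq_add_of_le' hk
    rw [ENNReal.sub_sub_cancel ENNReal.one_ne_top prob_le_one, Nat.add_sub_cancel]
    exact measure_eq_of_measure_le_eq_mul_pow (hmeas 1) htail j
end

section
/- Let p₁, p₂ ∈ (0,1) with p₁ + p₂ = 1, and let (u(x))_{x≥1} be i.i.d. with P(u(1) = 1) = p₁, P(u(1) = 2) = p₂. Then the dual offspring numbers satisfy: P(v(1) = 1) = 1, P(v(2) = 0, v(3) = 1) = p₂, P(v(2) = 1, v(3) = 0) = p₁ p₂, and P(v(2) = 1, v(3) = 1) = p₁². In particular v(2) and v(3) are not independent, so the dual reproduction is not a rank-dependent Galton–Watson reproduction with independent offspring numbers. -/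
open MeasureTheory ProbabilityTheory
open scoped ENNReal

/-!
On the almost sure event `u(1), u(2), u(3) ∈ {1, 2}` the dual is computed by hand: `v(1) = 1`, and
`(v(2), v(3))` is `(0, 1)`, `(1, 0)` or `(1, 1)` according as `u(1) = 2`, `(u(1), u(2)) = (1, 2)`
or `(u(1), u(2)) = (1, 1)`; the probabilities then follow from the independence of `u(1)` and
`u(2)`. Since `(v(2), v(3)) = (0, 0)` is a null event while `v(2) = 0` and `v(3) = 0` both have
positive probability, `v(2)` and `v(3)` are not independent.
-/

def partialSum (a : ℕ → ℕ) (y : ℕ) : ℕ := ∑ i ∈ Finset.Icc 1 y, a i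

noncomputable def pathwiseDual (a : ℕ → ℕ) (x : ℕ) : ℕ := sInf {y | x ≤ partialSum a y}

noncomputable def dualOffspring (a : ℕ → ℕ) (x : ℕ) : ℕ :=
  pathwiseDual a x - pathwiseDual a (x - 1)

section PathwiseDual

variable {a : ℕ → ℕ}

@[simp] lemma partialSum_zero : partialSum a 0 = 0 := by simp [partialSum]

@[simp] lemma partialSum_succ (y : ℕ) : partialSum a (y + 1) = partialSum a y + a (y + 1) :=
  Finset.sum_Icc_succ_top (by omega) a

lemma partialSum_mono : Monotone (partialSum a) :=
  monotone_nat_of_le_succ fun y => by simp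

@[simp] lemma pathwiseDual_zero : pathwiseDual a 0 = 0 :=
  Nat.sInf_eq_zero.2 (Or.inl (Nat.zero_le _))

lemma pathwiseDual_eq_succ {x k : ℕ} (hlt : partialSum a k < x)
    (hle : x ≤ partialSum a (k + 1)) :
    pathwiseDual a x = k + 1 :=
  (Nat.sInf_upward_closed_eq_succ_iff
    (fun _ _ hk h => h.trans (partialSum_mono hk)) k).2 ⟨hle, hlt.not_ge⟩

lemma dualOffspring_first_three (h1 : a 1 = 1 ∨ a 1 = 2) (h2 : a 2 = 1 ∨ a 2 = 2)
    (h3 : 1 ≤ a 3) :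
    dualOffspring a 1 = 1 ∧
    (dualOffspring a 2 = 0 ∧ dualOffspring a 3 = 1 ↔ a 1 = 2) ∧
    (dualOffspring a 2 = 1 ∧ dualOffspring a 3 = 0 ↔ a 1 = 1 ∧ a 2 = 2) ∧
    (dualOffspring a 2 = 1 ∧ dualOffspring a 3 = 1 ↔ a 1 = 1 ∧ a 2 = 1) ∧
    ¬(dualOffspring a 2 = 0 ∧ dualOffspring a 3 = 0) := by
  have hd1 : pathwiseDual a 1 = 1 := pathwiseDual_eq_succ (k := 0) (by simp) (by simp; omega)
  simp only [dualOffspring, Nat.add_one_sub_one, pathwiseDual_zero, hd1]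
  rcases h1 with h1 | h1 <;> rcases h2 with h2 | h2
  · rw [pathwiseDual_eq_succ (k := 1) (x := 2) (by simp [h1]) (by simp [h1, h2]),
      pathwiseDual_eq_succ (k := 2) (x := 3) (by simp [h1, h2]) (by simp [h1, h2]; omega)]
    simp [h1, h2]
  · rw [pathwiseDual_eq_succ (k := 1) (x := 2) (by simp [h1]) (by simp [h1, h2]),
      pathwiseDual_eq_succ (k := 1) (x := 3) (by simp [h1]) (by simp [h1, h2])]
    simp [h1, h2]
  all_goals
    rw [pathwiseDual_eq_succ (k := 0) (x := 2) (by simp) (by simp [h1]),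
      pathwiseDual_eq_succ (k := 1) (x := 3) (by simp [h1]) (by simp [h1]; omega)]
    simp [h1]

end PathwiseDual

section Probability

variable {Ω β γ : Type*} [MeasurableSpace Ω] {μ : Measure Ω}
  [MeasurableSpace β] [MeasurableSingletonClass β]
  [MeasurableSpace γ] [MeasurableSingletonClass γ]

lemma ae_eq_or_eq_of_measure_add_eq_one [IsProbabilityMeasure μ] {f : Ω → β}
    (hf : Measurable f) {a b : β} (hab : a ≠ b)
    (h : μ {ω | f ω = a} + μ {ω | f ω = b} = 1) :
    ∀ᵐ ω ∂μ, f ω = a ∨ f ω = b := by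
  have hdisj : Disjoint {ω | f ω = a} {ω | f ω = b} :=
    Set.disjoint_left.2 fun ω ha hb => hab (ha.symm.trans hb)
  have ha : MeasurableSet {ω | f ω = a} := hf (measurableSet_singleton a)
  have hb : MeasurableSet {ω | f ω = b} := hf (measurableSet_singleton b)
  exact (ae_mem_iff_measure_eq (ha.union hb).nullMeasurableSet).2
    (by rw [measure_union hdisj hb, h, measure_univ])

lemma measure_setOf_congr_ae {P Q : Ω → Prop} (h : ∀ᵐ ω ∂μ, P ω ↔ Q ω) :
    μ {ω | P ω} = μ {ω | Q ω} :=
  measure_congr (Filter.eventuallyEq_set.2 h)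

lemma ProbabilityTheory.IndepFun.measure_eq_and_eq {X : Ω → β} {Y : Ω → γ}
    (h : IndepFun X Y μ) (a : β) (b : γ) :
    μ {ω | X ω = a ∧ Y ω = b} = μ {ω | X ω = a} * μ {ω | Y ω = b} :=
  h.measure_inter_preimage_eq_mul {a} {b} (measurableSet_singleton a) (measurableSet_singleton b)

lemma not_indepFun_of_measure_eq_zero {X : Ω → β} {Y : Ω → γ} {a : β} {b : γ}
    (hX : μ {ω | X ω = a} ≠ 0) (hY : μ {ω | Y ω = b} ≠ 0)
    (hXY : μ {ω | X ω = a ∧ Y ω = b} = 0) :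
    ¬ IndepFun X Y μ := fun h => mul_ne_zero hX hY (h.measure_eq_and_eq a b ▸ hXY)

end Probability

theorem stmt_18_general {Ω : Type*} [MeasurableSpace Ω] (μ : Measure Ω) [IsProbabilityMeasure μ]
    (p₁ p₂ : ℝ≥0∞) (hp₁pos : 0 < p₁) (hp₂pos : 0 < p₂)
    (hsum : p₁ + p₂ = 1)
    (u : ℕ → Ω → ℕ) (hmeas : ∀ x : ℕ, Measurable (u x))
    (hindep : iIndepFun (fun n : ℕ => u (n + 1)) μ)
    (hdist1 : ∀ x : ℕ, 1 ≤ x → μ {ω | u x ω = 1} = p₁)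
    (hdist2 : ∀ x : ℕ, 1 ≤ x → μ {ω | u x ω = 2} = p₂)
    (U : Ω → ℕ → ℕ) (hU : ∀ ω : Ω, ∀ x : ℕ, U ω x = ∑ i ∈ Finset.Icc 1 x, u i ω)
    (V : Ω → ℕ → ℕ) (hV : ∀ ω : Ω, ∀ x : ℕ, V ω x = sInf {y : ℕ | x ≤ U ω y})
    (v : ℕ → Ω → ℕ) (hv : ∀ x : ℕ, 1 ≤ x → ∀ ω : Ω, v x ω = V ω x - V ω (x - 1)) :
    μ {ω | v 1 ω = 1} = 1 ∧
    μ {ω | v 2 ω = 0 ∧ v 3 ω = 1} = p₂ ∧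
    μ {ω | v 2 ω = 1 ∧ v 3 ω = 0} = p₁ * p₂ ∧
    μ {ω | v 2 ω = 1 ∧ v 3 ω = 1} = p₁ ^ 2 ∧
    ¬ IndepFun (v 2) (v 3) μ := by
  have hv_eq : ∀ x, 1 ≤ x → ∀ ω, v x ω = dualOffspring (u · ω) x := by
    intro x hx ω
    have hV_eq : ∀ y, V ω y = pathwiseDual (u · ω) y := fun y => by
      simp only [hV, hU, pathwiseDual, partialSum]
    rw [hv x hx ω, dualOffspring, hV_eq, hV_eq]
  have hu : ∀ i, 1 ≤ i → ∀ᵐ ω ∂μ, u i ω = 1 ∨ u i ω = 2 := fun i hi =>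
    ae_eq_or_eq_of_measure_add_eq_one (hmeas i) (by decide)
      (by rw [hdist1 i hi, hdist2 i hi, hsum])
  have hae : ∀ᵐ ω ∂μ, v 1 ω = 1 ∧
      (v 2 ω = 0 ∧ v 3 ω = 1 ↔ u 1 ω = 2) ∧
      (v 2 ω = 1 ∧ v 3 ω = 0 ↔ u 1 ω = 1 ∧ u 2 ω = 2) ∧
      (v 2 ω = 1 ∧ v 3 ω = 1 ↔ u 1 ω = 1 ∧ u 2 ω = 1) ∧
      ¬(v 2 ω = 0 ∧ v 3 ω = 0) := by
    filter_upwards [hu 1 le_rfl, hu 2 one_le_two, hu 3 (by norm_num)] with ω h1 h2 h3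
    rw [hv_eq 1 le_rfl, hv_eq 2 one_le_two, hv_eq 3 (by norm_num)]
    exact dualOffspring_first_three h1 h2 (by omega)
  have h12 : IndepFun (u 1) (u 2) μ := hindep.indepFun (i := 0) (j := 1) zero_ne_one
  have h01 : μ {ω | v 2 ω = 0 ∧ v 3 ω = 1} = p₂ := by
    rw [measure_setOf_congr_ae (hae.mono fun _ h => h.2.1), hdist2 1 le_rfl]
  have h10 : μ {ω | v 2 ω = 1 ∧ v 3 ω = 0} = p₁ * p₂ := by
    rw [measure_setOf_congr_ae (hae.mono fun _ h => h.2.2.1), h12.measure_eq_and_eq,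
      hdist1 1 le_rfl, hdist2 2 one_le_two]
  refine ⟨?_, h01, h10, ?_, ?_⟩
  · rw [measure_congr (Filter.eventuallyEq_univ.2 (hae.mono fun _ h => h.1)), measure_univ]
  · rw [measure_setOf_congr_ae (hae.mono fun _ h => h.2.2.2.1), h12.measure_eq_and_eq,
      hdist1 1 le_rfl, hdist1 2 one_le_two, sq]
  · refine not_indepFun_of_measure_eq_zero (a := 0) (b := 0)
      (fun h0 => hp₂pos.ne' (h01 ▸ measure_mono_null (fun _ h => h.1) h0))
      (fun h0 => mul_ne_zero hp₁pos.ne' hp₂pos.ne'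
        (h10 ▸ measure_mono_null (fun _ h => h.2) h0))
      (measure_eq_zero_iff_ae_notMem.2 (hae.mono fun _ h => h.2.2.2.2))

/-- Birth-death GW reproduction without deaths: if `P(u(1)=1) = p₁`,
`P(u(1)=2) = p₂` with `p₁ + p₂ = 1`, `p₁, p₂ ∈ (0,1)`, then
`P(v(1)=1) = 1`, `P(v(2)=0, v(3)=1) = p₂`, `P(v(2)=1, v(3)=0) = p₁p₂`,
`P(v(2)=1, v(3)=1) = p₁²`; in particular `v(2)` and `v(3)` are not independent. -/
theorem stmt_18 {Ω : Type*} [MeasurableSpace Ω] (μ : Measure Ω) [IsProbabilityMeasure μ]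
    (p₁ p₂ : ℝ≥0∞) (hp₁pos : 0 < p₁) (hp₁lt : p₁ < 1) (hp₂pos : 0 < p₂) (hp₂lt : p₂ < 1)
    (hsum : p₁ + p₂ = 1)
    (u : ℕ → Ω → ℕ) (hmeas : ∀ x : ℕ, Measurable (u x))
    (hindep : iIndepFun (fun n : ℕ => u (n + 1)) μ)
    (hdist1 : ∀ x : ℕ, 1 ≤ x → μ {ω | u x ω = 1} = p₁)
    (hdist2 : ∀ x : ℕ, 1 ≤ x → μ {ω | u x ω = 2} = p₂)
    (U : Ω → ℕ → ℕ) (hU : ∀ ω : Ω, ∀ x : ℕ, U ω x = ∑ i ∈ Finset.Icc 1 x, u i ω)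
    (V : Ω → ℕ → ℕ) (hV : ∀ ω : Ω, ∀ x : ℕ, V ω x = sInf {y : ℕ | x ≤ U ω y})
    (v : ℕ → Ω → ℕ) (hv : ∀ x : ℕ, 1 ≤ x → ∀ ω : Ω, v x ω = V ω x - V ω (x - 1)) :
    μ {ω | v 1 ω = 1} = 1 ∧
    μ {ω | v 2 ω = 0 ∧ v 3 ω = 1} = p₂ ∧
    μ {ω | v 2 ω = 1 ∧ v 3 ω = 0} = p₁ * p₂ ∧
    μ {ω | v 2 ω = 1 ∧ v 3 ω = 1} = p₁ ^ 2 ∧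
    ¬ IndepFun (v 2) (v 3) μ :=
  stmt_18_general μ p₁ p₂ hp₁pos hp₂pos hsum u hmeas hindep hdist1 hdist2 U hU V hV v hv
end
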